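/- Let H be a separable real Hilbert space and K ⊆ H a self-dual cone with K − K = H. Equip K with the topology induced by the weak topology of H, and set ρ(x) = 1 + ‖x‖². Then for every bounded weakly continuous function f : K → ℝ and every ε > 0 there exists a function g in the linear span of {x ↦ e^{−⟨x,u⟩} : u ∈ K} such that sup_{x ∈ K} |f(x) − g(x)| / ρ(x) < ε. -/

import Mathlib

open scoped RealInnerProductSpace

def IsSelfDualCone {H : Type*} [NormedAddCommGroup H] [InnerProductSpace ℝ H]
    (K : Set H) : Prop :=
  K = {x : H | ∀ y ∈ K, 0 ≤ ⟪x, y⟫}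

/-- The weak topology on a real inner product space: the topology induced by the maps
`x ↦ ⟪x, y⟫` for all `y` (equivalently, by all continuous linear functionals). -/
def weakTopology (H : Type*) [NormedAddCommGroup H] [InnerProductSpace ℝ H] :
    TopologicalSpace H :=
  TopologicalSpace.induced (fun x : H => fun y : H => ⟪x, y⟫) Pi.topologicalSpace

/-!
The maps `x ↦ e^{-⟪x, u⟫}`, `u ∈ K`, send `K` into the cube `[0,1]^K`, weakly continuously and,
since `K - K = H`, injectively. The truncated cone `K ∩ closedBall 0 R` is weakly compact
(Banach–Alaoglu, and a self-dual cone is an intersection of weakly closed half-spaces), so it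
embeds homeomorphically into the cube. By Tietze, `f` extends from the image to the whole cube
with the same bound `C`, and Stone–Weierstrass approximates the extension uniformly by polynomials
in the coordinates, which pull back to the span of the exponentials (closed under products since
`K + K ⊆ K`). Off the ball the error is at most `2C + δ`, which the weight `1 + ‖x‖²` absorbs once
`R` is large.
-/

open Set Topology

section General

variable {X Y : Type*} [TopologicalSpace X] [TopologicalSpace Y] [CompactSpace Y] [T2Space Y]

theorem exists_mem_subalgebra_near_on_compact {A : Subalgebra ℝ C(Y, ℝ)} (hA : A.SeparatesPoints)
    {B : Set X} (hB : IsCompact B) {Φ : X → Y} (hΦ : Continuous Φ) (hinj : InjOn Φ B)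
    {f : X → ℝ} (hf : ContinuousOn f B) {C : ℝ} (hfC : ∀ x ∈ B, |f x| ≤ C) (hC : 0 ≤ C)
    {δ : ℝ} (hδ : 0 < δ) :
    ∃ q ∈ A, (∀ x ∈ B, |f x - q (Φ x)| < δ) ∧ ∀ y, |q y| < C + δ := by
  have : CompactSpace B := isCompact_iff_compactSpace.mp hB
  have hemb : IsClosedEmbedding (B.domRestrict Φ) :=
    (hΦ.comp continuous_subtype_val).isClosedEmbedding hinj.injective
  obtain ⟨F, hFC, hFf⟩ := ContinuousMap.exists_extension_forall_mem_of_isClosedEmbedding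
    ⟨B.domRestrict f, hf.domRestrict⟩ (t := Icc (-C) C) (fun x => abs_le.mp (hfC x x.2))
    ⟨0, by simpa using hC⟩ hemb
  obtain ⟨⟨q, hqA⟩, hq⟩ :=
    ContinuousMap.exists_mem_subalgebra_near_continuous_of_separatesPoints A hA F F.2 δ hδ
  refine ⟨q, hqA, fun x hx => ?_, fun y => ?_⟩
  · have hFx : F (Φ x) = f x := congrFun hFf ⟨x, hx⟩
    rw [abs_sub_comm, ← hFx]
    exact hq _
  · have hFy := abs_le.mpr (hFC y)
    linarith [abs_sub_abs_le_abs_sub (q y) (F y), (Real.norm_eq_abs _ ▸ hq y : |q y - F y| < δ)]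

end General

def cubeCoord {ι : Type*} (i : ι) : C(ι → Icc (0 : ℝ) 1, ℝ) :=
  ⟨fun φ => φ i, by fun_prop⟩

theorem separatesPoints_adjoin_cubeCoord {ι : Type*} :
    (Algebra.adjoin ℝ (range (cubeCoord (ι := ι)))).SeparatesPoints := by
  intro φ ψ hne
  obtain ⟨i, hi⟩ := Function.ne_iff.mp hne
  exact ⟨_, ⟨cubeCoord i, Algebra.subset_adjoin ⟨i, rfl⟩, rfl⟩, fun h => hi (Subtype.ext h)⟩

section SelfDualCone

variable {H : Type*} [NormedAddCommGroup H] [InnerProductSpace ℝ H] {K : Set H}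

namespace IsSelfDualCone

theorem inner_nonneg (hK : IsSelfDualCone K) {x y : H} (hx : x ∈ K) (hy : y ∈ K) :
    0 ≤ ⟪x, y⟫ :=
  hK.le hx y hy

theorem zero_mem (hK : IsSelfDualCone K) : (0 : H) ∈ K :=
  hK.ge fun y _ => by simp

theorem add_mem (hK : IsSelfDualCone K) {x y : H} (hx : x ∈ K) (hy : y ∈ K) : x + y ∈ K :=
  hK.ge fun z hz => by
    rw [inner_add_left]
    exact add_nonneg (hK.inner_nonneg hx hz) (hK.inner_nonneg hy hz)

end IsSelfDualCone

theorem ext_inner_right_of_generating (hgen : ∀ z : H, ∃ x ∈ K, ∃ y ∈ K, z = x - y) {x y : H}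
    (h : ∀ u ∈ K, ⟪x, u⟫ = ⟪y, u⟫) : x = y :=
  ext_inner_right ℝ fun z => by
    obtain ⟨a, ha, b, hb, rfl⟩ := hgen z
    rw [inner_sub_right, inner_sub_right, h a ha, h b hb]

theorem continuous_inner_weakTopology (y : H) :
    Continuous[weakTopology H, _] fun x => ⟪x, y⟫ := by
  let _ := weakTopology H
  exact (continuous_apply y).comp continuous_induced_dom

theorem IsSelfDualCone.isClosed_weakTopology (hK : IsSelfDualCone K) :
    IsClosed[weakTopology H] K := by
  let _ := weakTopology H
  rw [hK]
  simp only [ofPred_forall]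
  exact isClosed_iInter fun y => isClosed_iInter fun _ =>
    isClosed_le continuous_const (continuous_inner_weakTopology y)

/-- Banach–Alaoglu, transported to `H` by the Riesz isomorphism. -/
theorem isCompact_closedBall_weakTopology [CompleteSpace H] (R : ℝ) :
    @IsCompact H (weakTopology H) (Metric.closedBall 0 R) := by
  have himage : (fun x y => ⟪x, y⟫) '' Metric.closedBall (0 : H) R =
      (fun (ℓ : WeakDual ℝ H) y => ℓ y) '' (WeakDual.toStrongDual ⁻¹' Metric.closedBall 0 R) := by
    ext φ
    constructor
    · rintro ⟨x, hx, rfl⟩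
      exact ⟨StrongDual.toWeakDual (InnerProductSpace.toDual ℝ H x), by simpa using hx, rfl⟩
    · rintro ⟨ℓ, hℓ, rfl⟩
      refine ⟨(InnerProductSpace.toDual ℝ H).symm (WeakDual.toStrongDual ℓ), by simpa using hℓ, ?_⟩
      funext y
      exact InnerProductSpace.toDual_symm_apply
  have hcompact : IsCompact ((fun x y => ⟪x, y⟫) '' Metric.closedBall (0 : H) R) := by
    rw [himage]
    exact (WeakDual.isCompact_closedBall 0 R).image (WeakBilin.coeFn_continuous _)
  let _ := weakTopology H
  exact (IsInducing.mk rfl).isCompact_iff.mpr hcompact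

theorem IsSelfDualCone.isCompact_inter_closedBall [CompleteSpace H] (hK : IsSelfDualCone K)
    (R : ℝ) : @IsCompact H (weakTopology H) (K ∩ Metric.closedBall 0 R) := by
  let _ := weakTopology H
  exact (isCompact_closedBall_weakTopology R).inter_left hK.isClosed_weakTopology

def expSpan (K : Set H) : Submodule ℝ (H → ℝ) :=
  Submodule.span ℝ {h : H → ℝ | ∃ u ∈ K, h = fun x : H => Real.exp (-⟪x, u⟫)}

theorem mul_mem_expSpan (hadd : ∀ u ∈ K, ∀ v ∈ K, u + v ∈ K) {g₁ g₂ : H → ℝ}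
    (h₁ : g₁ ∈ expSpan K) (h₂ : g₂ ∈ expSpan K) : g₁ * g₂ ∈ expSpan K := by
  have hmem := Submodule.mul_mem_mul h₁ h₂
  rw [expSpan, Submodule.span_mul_span] at hmem
  refine Submodule.span_mono ?_ hmem
  rintro _ ⟨_, ⟨u, hu, rfl⟩, _, ⟨v, hv, rfl⟩, rfl⟩
  refine ⟨u + v, hadd u hu v hv, funext fun x => ?_⟩
  simp [inner_add_right, Real.exp_add, mul_comm]

theorem const_mem_expSpan (h0 : (0 : H) ∈ K) (r : ℝ) : (fun _ : H => r) ∈ expSpan K := by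
  have h1 : (fun x : H => Real.exp (-⟪x, (0 : H)⟫)) ∈ expSpan K :=
    Submodule.subset_span ⟨0, h0, rfl⟩
  simpa [Pi.smul_def] using Submodule.smul_mem _ r h1

/-- `x ↦ (e^{-⟪x, u⟫})_{u ∈ K}`; `projIcc` clamps only for `x` outside the dual cone of `K`. -/
noncomputable def expCube (K : Set H) (x : H) : K → Icc (0 : ℝ) 1 :=
  fun u => projIcc 0 1 zero_le_one (Real.exp (-⟪x, u⟫))

theorem expCube_apply_coe {x : H} {u : K} (h : 0 ≤ ⟪x, (u : H)⟫) :
    (expCube K x u : ℝ) = Real.exp (-⟪x, (u : H)⟫) := by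
  rw [expCube, projIcc_of_mem]
  exact ⟨(Real.exp_pos _).le, Real.exp_le_one_iff.mpr (neg_nonpos.mpr h)⟩

theorem continuous_expCube (K : Set H) : Continuous[weakTopology H, _] (expCube K) := by
  let _ := weakTopology H
  exact continuous_pi fun u =>
    continuous_projIcc.comp (Real.continuous_exp.comp (continuous_inner_weakTopology (u : H)).neg)

theorem IsSelfDualCone.injOn_expCube (hK : IsSelfDualCone K)
    (hgen : ∀ z : H, ∃ x ∈ K, ∃ y ∈ K, z = x - y) : InjOn (expCube K) K := by
  intro x hx y hy hxy
  refine ext_inner_right_of_generating hgen fun u hu => ?_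
  have hu' := congrArg Subtype.val (congrFun hxy ⟨u, hu⟩)
  rw [expCube_apply_coe (hK.inner_nonneg hx hu), expCube_apply_coe (hK.inner_nonneg hy hu)] at hu'
  exact neg_inj.mp (Real.exp_injective hu')

theorem IsSelfDualCone.exists_mem_expSpan_eq_comp (hK : IsSelfDualCone K)
    {q : C(K → Icc (0 : ℝ) 1, ℝ)} (hq : q ∈ Algebra.adjoin ℝ (range cubeCoord)) :
    ∃ g ∈ expSpan K, ∀ x ∈ K, g x = q (expCube K x) := by
  induction hq using Algebra.adjoin_induction with
  | mem q hq =>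
    obtain ⟨u, rfl⟩ := hq
    exact ⟨_, Submodule.subset_span ⟨u, u.2, rfl⟩,
      fun x hx => (expCube_apply_coe (hK.inner_nonneg hx u.2)).symm⟩
  | algebraMap r => exact ⟨fun _ => r, const_mem_expSpan hK.zero_mem r, fun _ _ => rfl⟩
  | add q₁ q₂ _ _ ih₁ ih₂ =>
    obtain ⟨g₁, hg₁, he₁⟩ := ih₁
    obtain ⟨g₂, hg₂, he₂⟩ := ih₂
    exact ⟨g₁ + g₂, (expSpan K).add_mem hg₁ hg₂, fun x hx => by simp [he₁ x hx, he₂ x hx]⟩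
  | mul q₁ q₂ _ _ ih₁ ih₂ =>
    obtain ⟨g₁, hg₁, he₁⟩ := ih₁
    obtain ⟨g₂, hg₂, he₂⟩ := ih₂
    exact ⟨g₁ * g₂, mul_mem_expSpan (fun u hu v hv => hK.add_mem hu hv) hg₁ hg₂,
      fun x hx => by simp [he₁ x hx, he₂ x hx]⟩

end SelfDualCone

theorem stmt_19_general {H : Type*} [NormedAddCommGroup H] [InnerProductSpace ℝ H] [CompleteSpace H]
    (K : Set H) (hK : IsSelfDualCone K) (hKgen : ∀ z : H, ∃ x ∈ K, ∃ y ∈ K, z = x - y)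
    (f : H → ℝ) (hfb : ∃ C : ℝ, ∀ x ∈ K, |f x| ≤ C)
    (hfc : @ContinuousOn H ℝ (weakTopology H) _ f K)
    (ε : ℝ) (hε : 0 < ε) :
    ∃ g ∈ Submodule.span ℝ {h : H → ℝ | ∃ u ∈ K, h = fun x : H => Real.exp (-⟪x, u⟫)},
      ∃ δ : ℝ, δ < ε ∧ ∀ x ∈ K, |f x - g x| ≤ δ * (1 + ‖x‖ ^ 2) := by
  obtain ⟨C, hC, hfC⟩ : ∃ C, 0 ≤ C ∧ ∀ x ∈ K, |f x| ≤ C :=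
    let ⟨C, h⟩ := hfb
    ⟨max C 0, le_max_right C 0, fun x hx => (h x hx).trans (le_max_left C 0)⟩
  have hδ : 0 < ε / 2 := half_pos hε
  set R := √((2 * C + ε / 2) / (ε / 2))
  have hR : ε / 2 * R ^ 2 = 2 * C + ε / 2 := by
    rw [Real.sq_sqrt (by positivity)]
    field_simp
  let _ := weakTopology H
  obtain ⟨q, hqA, hqB, hq⟩ := exists_mem_subalgebra_near_on_compact
    separatesPoints_adjoin_cubeCoord (hK.isCompact_inter_closedBall R) (continuous_expCube K)
    ((hK.injOn_expCube hKgen).mono inter_subset_left) (hfc.mono inter_subset_left)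
    (fun x hx => hfC x hx.1) hC hδ
  obtain ⟨g, hg, hgq⟩ := hK.exists_mem_expSpan_eq_comp hqA
  refine ⟨g, hg, ε / 2, half_lt_self hε, fun x hx => ?_⟩
  rw [hgq x hx]
  by_cases hxR : ‖x‖ ≤ R
  · calc |f x - q (expCube K x)| ≤ ε / 2 := (hqB x ⟨hx, by simpa using hxR⟩).le
      _ ≤ ε / 2 * (1 + ‖x‖ ^ 2) := le_mul_of_one_le_right hδ.le (by nlinarith)
  · calc |f x - q (expCube K x)| ≤ |f x| + |q (expCube K x)| := abs_sub _ _
      _ ≤ ε / 2 * R ^ 2 := by linarith [hfC x hx, hq (expCube K x)]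
      _ ≤ ε / 2 * (1 + ‖x‖ ^ 2) := by
        have hRx : R ^ 2 ≤ ‖x‖ ^ 2 := pow_le_pow_left₀ (Real.sqrt_nonneg _) (le_of_not_ge hxR) 2
        gcongr
        linarith

/-- Density of the linear span of the Fourier basis elements
`x ↦ e^{−⟨x,u⟩}`, `u ∈ K`, in the bounded weakly continuous functions on `K`, with respect
to the weighted norm `‖f‖_ρ = sup_{x∈K} |f(x)|/(1+‖x‖²)`. -/
theorem stmt_19 {H : Type*} [NormedAddCommGroup H] [InnerProductSpace ℝ H] [CompleteSpace H]
    [TopologicalSpace.SeparableSpace H]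
    (K : Set H) (hK : IsSelfDualCone K) (hKgen : ∀ z : H, ∃ x ∈ K, ∃ y ∈ K, z = x - y)
    (f : H → ℝ) (hfb : ∃ C : ℝ, ∀ x ∈ K, |f x| ≤ C)
    (hfc : @ContinuousOn H ℝ (weakTopology H) _ f K)
    (ε : ℝ) (hε : 0 < ε) :
    ∃ g ∈ Submodule.span ℝ {h : H → ℝ | ∃ u ∈ K, h = fun x : H => Real.exp (-⟪x, u⟫)},
      ∃ δ : ℝ, δ < ε ∧ ∀ x ∈ K, |f x - g x| ≤ δ * (1 + ‖x‖ ^ 2) :=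
  stmt_19_general K hK hKgen f hfb hfc ε hε
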